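/- Let Q be a Hermitian operator on ℂ^d with spectral diameter Σ(Q) > 0, let γ be a density matrix on ℂ^d, set v := Tr(γ Q), and fix η > 0 and N ≥ 1. Let Π denote the spectral projector of the average operator Q̄ on (ℂ^d)^{⊗N} onto the direct sum of its eigenspaces with eigenvalue in [v − η Σ(Q), v + η Σ(Q)]. Then Tr(γ^{⊗N} Π) ≥ 1 − 2 e^{−2 η² N}. -/

import Mathlib

open Matrix BigOperators
open scoped ComplexOrder

/-- Functional calculus for a Hermitian matrix: apply `f` to the eigenvalues.
(Returns `0` if the matrix is not Hermitian.) -/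
noncomputable def matFun {n : Type*} [Fintype n] [DecidableEq n]
    (f : ℝ → ℝ) (A : Matrix n n ℂ) : Matrix n n ℂ :=
  if hA : A.IsHermitian then
    (hA.eigenvectorUnitary : Matrix n n ℂ) *
      Matrix.diagonal (fun i => (f (hA.eigenvalues i) : ℂ)) *
      (star hA.eigenvectorUnitary : Matrix n n ℂ)
  else 0

/-- Spectral projector of a Hermitian matrix onto the direct sum of the
eigenspaces with eigenvalue in the closed interval `[a, b]`. -/
noncomputable def specProj {n : Type*} [Fintype n] [DecidableEq n]
    (A : Matrix n n ℂ) (a b : ℝ) : Matrix n n ℂ :=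
  matFun (Set.indicator (Set.Icc a b) fun _ => (1 : ℝ)) A

/-- Largest eigenvalue of a Hermitian matrix. -/
noncomputable def eigMax {n : Type*} [Fintype n] [DecidableEq n]
    (A : Matrix n n ℂ) : ℝ :=
  if hA : A.IsHermitian then ⨆ i, hA.eigenvalues i else 0

/-- Smallest eigenvalue of a Hermitian matrix. -/
noncomputable def eigMin {n : Type*} [Fintype n] [DecidableEq n]
    (A : Matrix n n ℂ) : ℝ :=
  if hA : A.IsHermitian then ⨅ i, hA.eigenvalues i else 0

/-- Spectral diameter `Σ(A) = λ_max(A) - λ_min(A)` of a Hermitian matrix. -/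
noncomputable def specDiam {n : Type*} [Fintype n] [DecidableEq n]
    (A : Matrix n n ℂ) : ℝ :=
  eigMax A - eigMin A

/-- Operator norm `‖A‖_∞` of a Hermitian matrix: the largest absolute value
of an eigenvalue. -/
noncomputable def opNorm {n : Type*} [Fintype n] [DecidableEq n]
    (A : Matrix n n ℂ) : ℝ :=
  if hA : A.IsHermitian then ⨆ i, |hA.eigenvalues i| else 0

/-- The single-site operator `I^{⊗ℓ} ⊗ Q ⊗ I^{⊗(N-1-ℓ)}` on `(ℂ^d)^{⊗N}`. -/
noncomputable def siteOp {d : ℕ} (Q : Matrix (Fin d) (Fin d) ℂ) (N : ℕ) (ℓ : Fin N) :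
    Matrix (Fin N → Fin d) (Fin N → Fin d) ℂ :=
  Matrix.of fun x y =>
    (∏ k ∈ Finset.univ.erase ℓ, if x k = y k then (1 : ℂ) else 0) * Q (x ℓ) (y ℓ)

/-- The average operator `Q̄ := (1/N) Σ_ℓ I^{⊗ℓ} ⊗ Q ⊗ I^{⊗(N-1-ℓ)}` on `(ℂ^d)^{⊗N}`. -/
noncomputable def avgOp {d : ℕ} (Q : Matrix (Fin d) (Fin d) ℂ) (N : ℕ) :
    Matrix (Fin N → Fin d) (Fin N → Fin d) ℂ :=
  (N : ℂ)⁻¹ • ∑ ℓ : Fin N, siteOp Q N ℓ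

/-- The `N`-fold tensor power `ρ^{⊗N}` on `(ℂ^d)^{⊗N}`. -/
noncomputable def tensorPow {d : ℕ} (ρ : Matrix (Fin d) (Fin d) ℂ) (N : ℕ) :
    Matrix (Fin N → Fin d) (Fin N → Fin d) ℂ :=
  Matrix.of fun x y => ∏ ℓ, ρ (x ℓ) (y ℓ)

/-- The reduced state on the `ℓ`-th tensor factor: partial trace over all
tensor factors except the `ℓ`-th. -/
noncomputable def reduceAt {d N : ℕ}
    (Ω : Matrix (Fin N → Fin d) (Fin N → Fin d) ℂ) (ℓ : Fin N) :
    Matrix (Fin d) (Fin d) ℂ :=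
  Matrix.of fun a b =>
    ∑ x ∈ Finset.univ.filter (fun x : Fin N → Fin d => x ℓ = a),
      Ω x (Function.update x ℓ b)

/-- Quantum relative entropy `D(ρ‖σ) = Tr(ρ (log ρ - log σ))`, with the
convention `log 0 = 0` (so `0 log 0 = 0` on the kernel of `ρ`). -/
noncomputable def relEnt {n : Type*} [Fintype n] [DecidableEq n]
    (ρ σ : Matrix n n ℂ) : ℝ :=
  (Matrix.trace (ρ * (matFun Real.log ρ - matFun Real.log σ))).re

/-- Trace norm `‖A‖₁ = Tr √(AᴴA)`. -/
noncomputable def traceNorm {n : Type*} [Fintype n] [DecidableEq n]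
    (A : Matrix n n ℂ) : ℝ :=
  (Matrix.trace
    (((Matrix.posSemidef_conjTranspose_mul_self A).1.eigenvectorUnitary : Matrix n n ℂ) *
      Matrix.diagonal ((fun x : ℝ => ((Real.sqrt x : ℝ) : ℂ)) ∘
        (Matrix.posSemidef_conjTranspose_mul_self A).1.eigenvalues) *
      (star (Matrix.posSemidef_conjTranspose_mul_self A).1.eigenvectorUnitary :
        Matrix n n ℂ))).re

/-- Matrix exponential, defined by the power series. -/
noncomputable def matExp {n : Type*} [Fintype n] [DecidableEq n]
    (A : Matrix n n ℂ) : Matrix n n ℂ :=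
  ∑' k : ℕ, ((k.factorial : ℂ)⁻¹) • A ^ k

/-! In the eigenbasis `(uᵢ)` of `Q`, the average operator `Q̄` is diagonal in the product basis
`u_x = u_{x₀} ⊗ ⋯ ⊗ u_{x_{N-1}}`, with eigenvalue the empirical mean `N⁻¹ ∑ ℓ, λ (x ℓ)`, and the
diagonal entry of `γ^{⊗N}` at `u_x` is `∏ ℓ, p (x ℓ)` with `p i = ⟨uᵢ, γ uᵢ⟩`. Hence
`Tr(γ^{⊗N} Π)` is the probability that the mean of `N` i.i.d. samples of `λ` under `p` lies within
`η Σ(Q)` of its expectation `v = Tr(γ Q)`. Each sample lies in `[λ_min, λ_max]`, so the classical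
Hoeffding inequality bounds each of the two tails by `e^{-2 η² N}`. -/

open MeasureTheory ProbabilityTheory Real

namespace Matrix

section PiKronecker

variable {ι l m n R : Type*} [Fintype ι] [CommSemiring R]

noncomputable def piKronecker (A : ι → Matrix m n R) : Matrix (ι → m) (ι → n) R :=
  of fun x y => ∏ i, A i (x i) (y i)

theorem piKronecker_mul [DecidableEq ι] [Fintype m] (A : ι → Matrix l m R)
    (B : ι → Matrix m n R) :
    piKronecker A * piKronecker B = piKronecker fun i => A i * B i := by
  ext x y
  simp only [piKronecker, mul_apply, of_apply, Finset.prod_univ_sum, Fintype.piFinset_univ,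
    Finset.prod_mul_distrib]

theorem piKronecker_conjTranspose [StarRing R] (A : ι → Matrix m n R) :
    (piKronecker A)ᴴ = piKronecker fun i => (A i)ᴴ := by
  ext x y
  simp [piKronecker, conjTranspose_apply, star_prod]

theorem piKronecker_diagonal [DecidableEq m] (c : ι → m → R) :
    piKronecker (fun i => diagonal (c i)) = diagonal fun x => ∏ i, c i (x i) := by
  ext x y
  by_cases h : x = y
  · simp [piKronecker, h]
  · obtain ⟨i, hi⟩ := Function.ne_iff.1 h
    simp [piKronecker, diagonal_apply_ne _ h, Finset.prod_eq_zero (Finset.mem_univ i),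
      diagonal_apply_ne _ hi]

theorem piKronecker_one [DecidableEq m] : piKronecker (fun _ : ι => (1 : Matrix m m R)) = 1 := by
  simpa using piKronecker_diagonal (ι := ι) fun _ (_ : m) => (1 : R)

theorem piKronecker_conj [DecidableEq ι] [Fintype m] [StarRing R] (U D : ι → Matrix m m R) :
    piKronecker (fun i => U i * D i * star (U i)) =
      piKronecker U * piKronecker D * star (piKronecker U) := by
  simp only [star_eq_conjTranspose, piKronecker_conjTranspose, piKronecker_mul]

end PiKronecker

section Unitary

variable {ι m R : Type*} [Fintype ι] [DecidableEq ι] [Fintype m] [DecidableEq m] [CommRing R]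
  [StarRing R]

theorem piKronecker_mem_unitaryGroup {U : ι → Matrix m m R} (hU : ∀ i, U i ∈ unitaryGroup m R) :
    piKronecker U ∈ unitaryGroup (ι → m) R := by
  rw [mem_unitaryGroup_iff', star_eq_conjTranspose, piKronecker_conjTranspose, piKronecker_mul]
  simp_rw [← star_eq_conjTranspose, Unitary.star_mul_self_of_mem (hU _)]
  exact piKronecker_one

end Unitary

theorem diagonal_comp_mul_eq_mul_diagonal_comp {n R : Type*} [Fintype n] [DecidableEq n]
    [CommRing R] [NoZeroDivisors R] {μ ν : n → R} {W : Matrix n n R}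
    (h : diagonal μ * W = W * diagonal ν) (g : R → R) :
    diagonal (g ∘ μ) * W = W * diagonal (g ∘ ν) := by
  ext i j
  have hij : (μ i - ν j) * W i j = 0 := by
    have := congr_fun₂ h i j
    simp only [diagonal_mul, mul_diagonal] at this
    linear_combination this
  simp only [diagonal_mul, mul_diagonal, Function.comp_apply]
  rcases mul_eq_zero.1 hij with hμν | hW
  · rw [sub_eq_zero.1 hμν, mul_comm]
  · simp [hW]

end Matrix

theorem matFun_conj_diagonal {n : Type*} [Fintype n] [DecidableEq n] {V : Matrix n n ℂ}
    (hV : V ∈ unitaryGroup n ℂ) (μ : n → ℝ) (f : ℝ → ℝ) :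
    matFun f (V * diagonal (fun i => (μ i : ℂ)) * star V) =
      V * diagonal (fun i => (f (μ i) : ℂ)) * star V := by
  have hA : (V * diagonal (fun i => (μ i : ℂ)) * star V).IsHermitian :=
    isHermitian_mul_mul_conjTranspose _ (by simp [IsHermitian, diagonal_conjTranspose])
  rw [matFun, dif_pos hA]
  set U : Matrix n n ℂ := ↑hA.eigenvectorUnitary
  have hU : U ∈ unitaryGroup n ℂ := hA.eigenvectorUnitary.2
  have hspec : V * diagonal (fun i => (μ i : ℂ)) * star V =
      U * diagonal (fun i => (hA.eigenvalues i : ℂ)) * star U :=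
    hA.spectral_theorem.trans (by rw [Unitary.conjStarAlgAut_apply]; rfl)
  -- `star V * U` intertwines the two diagonal forms, hence also their images under `f`.
  have hW : diagonal (fun i => (μ i : ℂ)) * (star V * U) =
      (star V * U) * diagonal (fun i => (hA.eigenvalues i : ℂ)) := by
    calc _ = star V * (V * diagonal (fun i => (μ i : ℂ)) * star V) * U := by
          simp only [← mul_assoc, Unitary.star_mul_self_of_mem hV, one_mul]
      _ = _ := by
          conv_lhs => rw [hspec]
          simp only [mul_assoc, Unitary.star_mul_self_of_mem hU, mul_one]
  have hfW := diagonal_comp_mul_eq_mul_diagonal_comp hW fun z => (f z.re : ℂ)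
  simp only [Function.comp_def, Complex.ofReal_re] at hfW
  calc U * diagonal (fun i => (f (hA.eigenvalues i) : ℂ)) * star U
      = V * ((star V * U) * diagonal (fun i => (f (hA.eigenvalues i) : ℂ))) * star U := by
        simp only [← mul_assoc, Unitary.mul_star_self_of_mem hV, one_mul]
    _ = V * diagonal (fun i => (f (μ i) : ℂ)) * star V := by
        rw [← hfW]
        simp only [mul_assoc, Unitary.mul_star_self_of_mem hU, mul_one]

section TensorPower

variable {d N : ℕ}

theorem siteOp_eq_piKronecker (Q : Matrix (Fin d) (Fin d) ℂ) (ℓ : Fin N) :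
    siteOp Q N ℓ = piKronecker (Pi.mulSingle ℓ Q) := by
  ext x y
  rw [siteOp, piKronecker, of_apply, of_apply, ← Finset.prod_erase_mul _ _ (Finset.mem_univ ℓ)]
  congr 1
  · refine Finset.prod_congr rfl fun k hk => ?_
    simp [Finset.ne_of_mem_erase hk, one_apply]
  · simp

theorem siteOp_conj_diagonal {Q U : Matrix (Fin d) (Fin d) ℂ} (hU : U ∈ unitaryGroup (Fin d) ℂ)
    {c : Fin d → ℂ} (hQ : Q = U * diagonal c * star U) (ℓ : Fin N) :
    siteOp Q N ℓ = tensorPow U N * diagonal (fun x => c (x ℓ)) * star (tensorPow U N) := by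
  have hsite : Pi.mulSingle ℓ Q =
      fun k => U * diagonal ((Pi.mulSingle ℓ c : Fin N → Fin d → ℂ) k) * star U := by
    funext k
    by_cases hk : k = ℓ
    · simp [hk, hQ]
    · simp [hk, Unitary.mul_star_self_of_mem hU]
  rw [siteOp_eq_piKronecker, hsite, piKronecker_conj, piKronecker_diagonal]
  congr 3
  funext x
  rw [Finset.prod_eq_single ℓ (fun k _ hk => by simp [hk]) (by simp)]
  simp

theorem avgOp_conj_diagonal {Q U : Matrix (Fin d) (Fin d) ℂ} (hU : U ∈ unitaryGroup (Fin d) ℂ)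
    {c : Fin d → ℂ} (hQ : Q = U * diagonal c * star U) :
    avgOp Q N = tensorPow U N * diagonal (fun x => (N : ℂ)⁻¹ * ∑ ℓ, c (x ℓ)) *
      star (tensorPow U N) := by
  rw [avgOp, Finset.sum_congr rfl fun ℓ _ => siteOp_conj_diagonal hU hQ ℓ, ← Finset.sum_mul,
    ← Finset.mul_sum, ← smul_mul_assoc, ← mul_smul_comm]
  congr 2
  ext x y
  by_cases h : x = y <;> simp [h, Matrix.sum_apply, Finset.mul_sum]

theorem trace_tensorPow_mul_conj_diagonal (γ : Matrix (Fin d) (Fin d) ℂ)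
    {U : Matrix (Fin d) (Fin d) ℂ} (c : (Fin N → Fin d) → ℂ) :
    trace (tensorPow γ N * (tensorPow U N * diagonal c * star (tensorPow U N))) =
      ∑ x, c x * ∏ ℓ, (Uᴴ * γ * U) (x ℓ) (x ℓ) := by
  have hconj : star (tensorPow U N) * tensorPow γ N * tensorPow U N =
      tensorPow (Uᴴ * γ * U) N := by
    change star (piKronecker fun _ => U) * piKronecker (fun _ => γ) * piKronecker (fun _ => U) =
      piKronecker fun _ => Uᴴ * γ * U
    rw [star_eq_conjTranspose, piKronecker_conjTranspose, piKronecker_mul, piKronecker_mul]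
  rw [← mul_assoc, ← mul_assoc, trace_mul_cycle, ← mul_assoc, hconj]
  simp [trace, mul_diagonal, tensorPow, mul_comm]

end TensorPower

noncomputable def Matrix.PosSemidef.diagPMF {n : Type*} [Fintype n] {ρ : Matrix n n ℂ}
    (hρ : ρ.PosSemidef) (hρ1 : ρ.trace = 1) : PMF n :=
  PMF.ofFintype (fun i => ENNReal.ofReal (ρ i i).re) (by
    rw [← ENNReal.ofReal_sum_of_nonneg fun i _ => (Complex.nonneg_iff.1 hρ.diag_nonneg).1,
      ← Complex.re_sum, show ∑ i, ρ i i = 1 from hρ1, Complex.one_re, ENNReal.ofReal_one])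

theorem Matrix.PosSemidef.diagPMF_toMeasure_real_singleton {n : Type*} [Fintype n]
    [MeasurableSpace n] [MeasurableSingletonClass n] {ρ : Matrix n n ℂ} (hρ : ρ.PosSemidef)
    (hρ1 : ρ.trace = 1) (i : n) : (hρ.diagPMF hρ1).toMeasure.real {i} = (ρ i i).re := by
  rw [measureReal_def, PMF.toMeasure_apply_singleton _ _ (measurableSet_singleton i), diagPMF,
    PMF.ofFintype_apply, ENNReal.toReal_ofReal (Complex.nonneg_iff.1 hρ.diag_nonneg).1]

theorem Matrix.PosSemidef.ofReal_re_apply_self {n : Type*} {ρ : Matrix n n ℂ}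
    (hρ : ρ.PosSemidef) (i : n) : ((ρ i i).re : ℂ) = ρ i i :=
  (Complex.eq_re_of_ofReal_le (r := 0) (by rw [Complex.ofReal_zero]; exact hρ.diag_nonneg)).symm

theorem measureReal_pi_eq_sum_indicator {ι α : Type*} [Fintype ι] [DecidableEq ι] [Fintype α]
    [MeasurableSpace α] [MeasurableSingletonClass α] (P : Measure α) [IsFiniteMeasure P]
    (S : Set (ι → α)) :
    (Measure.pi fun _ : ι => P).real S = ∑ x, S.indicator (fun x => ∏ i, P.real {x i}) x := by
  rw [← S.toFinite.coe_toFinset, Finset.sum_indicator_subset _ (Finset.subset_univ _),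
    ← sum_measureReal_singleton]
  refine Finset.sum_congr rfl fun x _ => ?_
  simp only [measureReal_def, Measure.pi_singleton, ENNReal.toReal_prod]

section Hoeffding

variable {Ω : Type*} [MeasurableSpace Ω] {P : Measure Ω} [IsProbabilityMeasure P] {X : Ω → ℝ}
  {a b η : ℝ} {N : ℕ}

theorem measureReal_pi_mean_ge_le (hX : Measurable X) (hab : a < b)
    (hXab : ∀ ω, X ω ∈ Set.Icc a b) (hN : 0 < N) (hη : 0 ≤ η) :
    (Measure.pi fun _ : Fin N => P).real
        {ω | P[X] + η * (b - a) ≤ (N : ℝ)⁻¹ * ∑ ℓ, X (ω ℓ)} ≤ exp (-2 * η ^ 2 * N) := by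
  set μ := Measure.pi fun _ : Fin N => P
  have hindep : iIndepFun (fun ℓ ω => X (ω ℓ) - P[X]) μ :=
    iIndepFun_pi (X := fun _ x => X x - P[X]) fun _ => (hX.sub_const _).aemeasurable
  have hsubG (ℓ : Fin N) :
      HasSubgaussianMGF (fun ω => X (ω ℓ) - P[X]) ((‖b - a‖₊ / 2) ^ 2) μ := by
    have h : HasSubgaussianMGF (fun x => X x - P[X]) ((‖b - a‖₊ / 2) ^ 2) (μ.map (· ℓ)) := by
      rw [(measurePreserving_eval (fun _ : Fin N => P) ℓ).map_eq]
      exact hasSubgaussianMGF_of_mem_Icc hX.aemeasurable (ae_of_all P hXab)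
    exact HasSubgaussianMGF.of_map (Y := fun ω : Fin N → Ω => ω ℓ) (X := fun x => X x - P[X])
      (measurable_pi_apply ℓ).aemeasurable h
  have hN' : (0 : ℝ) < N := by exact_mod_cast hN
  have hε : 0 ≤ N * η * (b - a) := by have := sub_pos.2 hab; positivity
  have h := HasSubgaussianMGF.measure_sum_ge_le_of_iIndepFun hindep (s := Finset.univ)
    (fun ℓ _ => hsubG ℓ) hε
  convert h using 2
  · ext ω
    simp only [Set.mem_ofPred_eq, Finset.sum_sub_distrib, Finset.sum_const, Finset.card_univ,
      Fintype.card_fin, nsmul_eq_mul]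
    rw [inv_mul_eq_div, le_div_iff₀ hN']
    constructor <;> intro <;> linarith
  · simp only [Finset.sum_const, Finset.card_univ, Fintype.card_fin, nsmul_eq_mul]
    push_cast
    rw [Real.norm_of_nonneg (sub_pos.2 hab).le]
    have : b - a ≠ 0 := (sub_pos.2 hab).ne'
    field_simp

theorem one_sub_two_mul_exp_le_measureReal_pi_mean_mem_Icc (hX : Measurable X) (hab : a < b)
    (hXab : ∀ ω, X ω ∈ Set.Icc a b) (hN : 0 < N) (hη : 0 ≤ η) :
    1 - 2 * exp (-2 * η ^ 2 * N) ≤ (Measure.pi fun _ : Fin N => P).real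
        {ω | (N : ℝ)⁻¹ * ∑ ℓ, X (ω ℓ) ∈ Set.Icc (P[X] - η * (b - a)) (P[X] + η * (b - a))} := by
  set μ := Measure.pi fun _ : Fin N => P
  have hupper := measureReal_pi_mean_ge_le (P := P) hX hab hXab hN hη
  have hlower := measureReal_pi_mean_ge_le (P := P) hX.neg (neg_lt_neg hab)
    (fun ω => ⟨neg_le_neg (hXab ω).2, neg_le_neg (hXab ω).1⟩) hN hη
  have hcover : Set.univ ⊆ {ω : Fin N → Ω | (N : ℝ)⁻¹ * ∑ ℓ, X (ω ℓ) ∈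
        Set.Icc (P[X] - η * (b - a)) (P[X] + η * (b - a))} ∪
      {ω | P[X] + η * (b - a) ≤ (N : ℝ)⁻¹ * ∑ ℓ, X (ω ℓ)} ∪
      {ω | P[-X] + η * (-a - -b) ≤ (N : ℝ)⁻¹ * ∑ ℓ, (-X) (ω ℓ)} := by
    intro ω _
    simp only [Set.mem_union, Set.mem_ofPred_eq, Set.mem_Icc, Pi.neg_apply, integral_neg,
      Finset.sum_neg_distrib, mul_neg]
    by_contra! h
    linarith [h.1.1 (by linarith [h.2])]
  have h1 := (measureReal_mono (μ := μ) hcover).trans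
    ((measureReal_union_le _ _).trans (add_le_add_left (measureReal_union_le _ _) _))
  rw [probReal_univ] at h1
  linarith

end Hoeffding

theorem Matrix.IsHermitian.eq_conj_diagonal_eigenvalues {n : Type*} [Fintype n] [DecidableEq n]
    {A : Matrix n n ℂ} (hA : A.IsHermitian) :
    A = (hA.eigenvectorUnitary : Matrix n n ℂ) * diagonal (fun i => (hA.eigenvalues i : ℂ)) *
      star (hA.eigenvectorUnitary : Matrix n n ℂ) :=
  hA.spectral_theorem.trans (by rw [Unitary.conjStarAlgAut_apply]; rfl)

theorem Matrix.IsHermitian.eigenvalues_mem_Icc {n : Type*} [Fintype n] [DecidableEq n]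
    {A : Matrix n n ℂ} (hA : A.IsHermitian) (i : n) :
    hA.eigenvalues i ∈ Set.Icc (eigMin A) (eigMax A) := by
  rw [eigMin, eigMax, dif_pos hA, dif_pos hA]
  exact ⟨ciInf_le (Set.finite_range _).bddBelow i, le_ciSup (Set.finite_range _).bddAbove i⟩

section Measurement

variable {n : Type*} [Fintype n] [DecidableEq n] {Q γ : Matrix n n ℂ}

noncomputable def Matrix.IsHermitian.measurementPMF (hQ : Q.IsHermitian) (hγ : γ.PosSemidef)
    (hγ1 : γ.trace = 1) : PMF n :=
  (hγ.conjTranspose_mul_mul_same (hQ.eigenvectorUnitary : Matrix n n ℂ)).diagPMF (by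
    rw [trace_mul_cycle, ← star_eq_conjTranspose,
      Unitary.mul_star_self_of_mem hQ.eigenvectorUnitary.2, one_mul, hγ1])

variable [MeasurableSpace n] [MeasurableSingletonClass n]

theorem Matrix.IsHermitian.measurementPMF_toMeasure_real_singleton (hQ : Q.IsHermitian)
    (hγ : γ.PosSemidef) (hγ1 : γ.trace = 1) (i : n) :
    (hQ.measurementPMF hγ hγ1).toMeasure.real {i} =
      (((hQ.eigenvectorUnitary : Matrix n n ℂ)ᴴ * γ * hQ.eigenvectorUnitary) i i).re :=
  PosSemidef.diagPMF_toMeasure_real_singleton _ _ i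

theorem Matrix.IsHermitian.integral_eigenvalues_measurementPMF (hQ : Q.IsHermitian)
    (hγ : γ.PosSemidef) (hγ1 : γ.trace = 1) :
    ∫ i, hQ.eigenvalues i ∂(hQ.measurementPMF hγ hγ1).toMeasure = (trace (γ * Q)).re := by
  rw [integral_fintype .of_finite]
  conv_rhs => rw [hQ.eq_conj_diagonal_eigenvalues, ← mul_assoc, ← mul_assoc, trace_mul_cycle,
    ← mul_assoc]
  simp [trace, mul_diagonal, hQ.measurementPMF_toMeasure_real_singleton hγ hγ1, Complex.re_sum,
    star_eq_conjTranspose]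

end Measurement

theorem re_trace_tensorPow_mul_specProj_avgOp {d N : ℕ} {Q γ : Matrix (Fin d) (Fin d) ℂ}
    (hQ : Q.IsHermitian) (hγ : γ.PosSemidef) (hγ1 : γ.trace = 1) (a b : ℝ) :
    (trace (tensorPow γ N * specProj (avgOp Q N) a b)).re =
      (Measure.pi fun _ : Fin N => (hQ.measurementPMF hγ hγ1).toMeasure).real
        {x | (N : ℝ)⁻¹ * ∑ ℓ, hQ.eigenvalues (x ℓ) ∈ Set.Icc a b} := by
  set U : Matrix (Fin d) (Fin d) ℂ := ↑hQ.eigenvectorUnitary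
  have hU : U ∈ unitaryGroup (Fin d) ℂ := hQ.eigenvectorUnitary.2
  have hproj : specProj (avgOp Q N) a b = tensorPow U N *
      diagonal (fun x => (((Set.Icc a b).indicator (fun _ => 1)
        ((N : ℝ)⁻¹ * ∑ ℓ, hQ.eigenvalues (x ℓ)) : ℝ) : ℂ)) *
      star (tensorPow U N) := by
    rw [specProj, avgOp_conj_diagonal hU hQ.eq_conj_diagonal_eigenvalues]
    have hmean : (fun x : Fin N → Fin d => (N : ℂ)⁻¹ * ∑ ℓ, (hQ.eigenvalues (x ℓ) : ℂ)) =
        fun x => (((N : ℝ)⁻¹ * ∑ ℓ, hQ.eigenvalues (x ℓ) : ℝ) : ℂ) := by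
      push_cast; rfl
    rw [hmean]
    exact matFun_conj_diagonal (piKronecker_mem_unitaryGroup (ι := Fin N) fun _ => hU) _ _
  rw [hproj, trace_tensorPow_mul_conj_diagonal, measureReal_pi_eq_sum_indicator, Complex.re_sum]
  refine Finset.sum_congr rfl fun x _ => ?_
  have hρ := hγ.conjTranspose_mul_mul_same U
  rw [Finset.prod_congr rfl fun ℓ _ => (hρ.ofReal_re_apply_self (x ℓ)).symm, ← Complex.ofReal_prod]
  simp only [← Complex.ofReal_mul, Complex.ofReal_re, hQ.measurementPMF_toMeasure_real_singleton]
  by_cases hx : x ∈ {x : Fin N → Fin d | (N : ℝ)⁻¹ * ∑ ℓ, hQ.eigenvalues (x ℓ) ∈ Set.Icc a b}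
  · rw [Set.indicator_of_mem hx, Set.indicator_of_mem (s := Set.Icc a b) hx, one_mul]
  · rw [Set.indicator_of_notMem hx, Set.indicator_of_notMem (s := Set.Icc a b) hx, zero_mul]

/-- Quantum Hoeffding bound: measuring the average operator
`Q̄` on the product state `γ^{⊗N}` yields an outcome within `η Σ(Q)` of
`v = Tr(γ Q)` with probability at least `1 - 2 e^{-2 η² N}`. -/
theorem hoeffding_tensor_power
    {d : ℕ} (Q γ : Matrix (Fin d) (Fin d) ℂ)
    (hQ : Q.IsHermitian) (hSigma : 0 < specDiam Q)
    (hγ : γ.PosSemidef) (hγ1 : γ.trace = 1)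
    (v : ℝ) (hv : v = (Matrix.trace (γ * Q)).re)
    (η : ℝ) (hη : 0 < η) (N : ℕ) (hN : 1 ≤ N) :
    1 - 2 * Real.exp (-2 * η ^ 2 * N) ≤
      (Matrix.trace (tensorPow γ N *
        specProj (avgOp Q N) (v - η * specDiam Q) (v + η * specDiam Q))).re := by
  rw [re_trace_tensorPow_mul_specProj_avgOp hQ hγ hγ1, hv,
    ← hQ.integral_eigenvalues_measurementPMF hγ hγ1, specDiam]
  exact one_sub_two_mul_exp_le_measureReal_pi_mean_mem_Icc (measurable_of_finite _)
    (sub_pos.1 hSigma) hQ.eigenvalues_mem_Icc hN hη.le
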